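/- arXiv:2603.09720 — 3 statements merged into one kernel-verified Lean document; each statement's English description precedes it below -/
import Mathlib

section
/- Let B_2 = (I_N, (n−1)I_N)·V^T with n ≥ 2, where V is the Hermite Vandermonde matrix on the 2N Gauss–Hermite nodes. Then for every y in the kernel of B_2, y^T A y ≤ 0, where A is the symmetric Jacobi matrix of the Hermite recurrence. Moreover, if n ≥ 3, then y^T A y < 0 for every nonzero y in the kernel of B_2. -/
open Matrix

private lemma sum_two_ite {α : Type*} [Fintype α] [DecidableEq α]
    (a b : α) (hab : a ≠ b) (p q : α → ℝ) :
    (∑ j, (if j = a then p j else if j = b then q j else 0)) = p a + q b := by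
  have h : ∀ j, (if j = a then p j else if j = b then q j else 0)
      = (if j = a then p j else 0) + (if j = b then q j else 0) := by
    intro j
    by_cases h1 : j = a
    · subst h1; simp [if_neg (Ne.symm hab), hab]
    · by_cases h2 : j = b <;> simp [h1, h2, Ne.symm hab]
  simp only [h, Finset.sum_add_distrib, Finset.sum_ite_eq', Finset.mem_univ, if_true]

/-- Dissipativity of the boundary matrix `B₂ = (I_N, (n-1)I_N) Vᵀ`: for every `y` in the
kernel of `B₂` one has `yᵀ A y ≤ 0`, and for `n ≥ 3` the inequality is strict for
nonzero `y`. Here `A` is the symmetric Jacobi matrix of the Hermite recurrence,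
`V` the Hermite Vandermonde matrix satisfying `V⁻¹ = diag(W,W) Vᵀ` and
`V⁻¹ A V = diag(-Λ, Λ)` with positive weights `w_k` and positive nodes `z_k`. -/
theorem boundary_matrix_B2_dissipative
    (N : ℕ) (hN : 0 < N) (n : ℕ) (hn : 2 ≤ n)
    (z w : Fin N → ℝ)
    (hz : ∀ k, 0 < z k) (hw : ∀ k, 0 < w k)
    (u ww : Fin (N + N) → ℝ)
    (hu1 : ∀ k : Fin N, u (Fin.castAdd N k) = -(z k))
    (hu2 : ∀ k : Fin N, u (Fin.natAdd N k) = z k)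
    (hww1 : ∀ k : Fin N, ww (Fin.castAdd N k) = w k)
    (hww2 : ∀ k : Fin N, ww (Fin.natAdd N k) = w k)
    (A V : Matrix (Fin (N + N)) (Fin (N + N)) ℝ)
    (hAsymm : Aᵀ = A)
    (hUnit : IsUnit V)
    (hVinv : V⁻¹ = Matrix.diagonal ww * Vᵀ)
    (hdiag : V⁻¹ * A * V = Matrix.diagonal u)
    (C : Matrix (Fin N) (Fin (N + N)) ℝ)
    (hC : ∀ (i : Fin N) (j : Fin (N + N)),
      C i j = if j = Fin.castAdd N i then 1
        else if j = Fin.natAdd N i then ((n : ℝ) - 1) else 0)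
    (B₂ : Matrix (Fin N) (Fin (N + N)) ℝ)
    (hB₂ : B₂ = C * Vᵀ) :
    (∀ y : Fin (N + N) → ℝ, B₂.mulVec y = 0 → y ⬝ᵥ A.mulVec y ≤ 0) ∧
      (3 ≤ n → ∀ y : Fin (N + N) → ℝ, B₂.mulVec y = 0 → y ≠ 0 →
        y ⬝ᵥ A.mulVec y < 0) := by
  classical
  have hd : IsUnit V.det := (Matrix.isUnit_iff_isUnit_det V).1 hUnit
  have hdT : IsUnit Vᵀ.det := by rwa [Matrix.det_transpose]
  set d : Fin (N + N) → ℝ := fun j => u j * ww j with hdd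
  -- A = V * diagonal d * Vᵀ
  have hAV : A = V * Matrix.diagonal d * Vᵀ := by
    have h1 : V * (V⁻¹ * A * V) * V⁻¹ = A := by
      simp only [Matrix.mul_assoc]
      rw [Matrix.mul_nonsing_inv _ hd]
      simp only [← Matrix.mul_assoc]
      rw [Matrix.mul_nonsing_inv _ hd, Matrix.one_mul, Matrix.mul_one]
    rw [← h1, hdiag, hVinv, Matrix.mul_assoc, Matrix.mul_assoc,
      ← Matrix.mul_assoc (Matrix.diagonal u), Matrix.diagonal_mul_diagonal]
  -- quadratic form identity
  have hquad : ∀ y : Fin (N + N) → ℝ,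
      y ⬝ᵥ A.mulVec y = ∑ j, d j * (Vᵀ.mulVec y j) ^ 2 := by
    intro y
    rw [hAV, ← Matrix.mulVec_mulVec, ← Matrix.mulVec_mulVec,
      Matrix.dotProduct_mulVec, ← Matrix.mulVec_transpose]
    simp only [dotProduct, Matrix.mulVec_diagonal]
    refine Finset.sum_congr rfl (fun j _ => by ring)
  -- kernel condition
  have hker : ∀ y : Fin (N + N) → ℝ, B₂.mulVec y = 0 → ∀ k : Fin N,
      Vᵀ.mulVec y (Fin.castAdd N k) = -((n : ℝ) - 1) * Vᵀ.mulVec y (Fin.natAdd N k) := by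
    intro y hy k
    have h0 : (C * Vᵀ).mulVec y k = 0 := by rw [← hB₂, hy]; rfl
    rw [← Matrix.mulVec_mulVec] at h0
    set x := Vᵀ.mulVec y with hx
    have hne : Fin.castAdd N k ≠ Fin.natAdd N k := by
      simp only [Fin.ne_iff_vne, Fin.coe_castAdd, Fin.coe_natAdd]
      omega
    have : C.mulVec x k = x (Fin.castAdd N k) + ((n : ℝ) - 1) * x (Fin.natAdd N k) := by
      simp only [Matrix.mulVec, dotProduct, hC]
      rw [show (∑ j, (if j = Fin.castAdd N k then (1:ℝ)
          else if j = Fin.natAdd N k then ((n : ℝ) - 1) else 0) * x j)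
        = ∑ j, (if j = Fin.castAdd N k then x j
          else if j = Fin.natAdd N k then ((n : ℝ) - 1) * x j else 0) from
        Finset.sum_congr rfl (fun j _ => by split_ifs <;> ring)]
      exact sum_two_ite _ _ hne _ _
    rw [h0] at this
    linarith [this.symm]
  -- main value computation
  have hval : ∀ y : Fin (N + N) → ℝ, B₂.mulVec y = 0 →
      y ⬝ᵥ A.mulVec y
        = (1 - ((n : ℝ) - 1) ^ 2) *
            ∑ k : Fin N, w k * z k * (Vᵀ.mulVec y (Fin.natAdd N k)) ^ 2 := by
    intro y hy
    rw [hquad y, Fin.sum_univ_add]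
    rw [Finset.mul_sum, ← Finset.sum_add_distrib]
    refine Finset.sum_congr rfl (fun k _ => ?_)
    rw [hker y hy k]
    simp only [hdd, hu1, hu2, hww1, hww2]
    ring
  have hterm_nonneg : ∀ y : Fin (N + N) → ℝ, ∀ k : Fin N,
      0 ≤ w k * z k * (Vᵀ.mulVec y (Fin.natAdd N k)) ^ 2 := by
    intro y k
    have := (hw k).le
    have := (hz k).le
    positivity
  constructor
  · intro y hy
    rw [hval y hy]
    have hfac : 1 - ((n : ℝ) - 1) ^ 2 ≤ 0 := by
      have : (2 : ℝ) ≤ (n : ℝ) := by exact_mod_cast hn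
      nlinarith
    have hsum : 0 ≤ ∑ k : Fin N, w k * z k * (Vᵀ.mulVec y (Fin.natAdd N k)) ^ 2 :=
      Finset.sum_nonneg (fun k _ => hterm_nonneg y k)
    exact mul_nonpos_of_nonpos_of_nonneg hfac hsum
  · intro hn3 y hy hy0
    rw [hval y hy]
    have hfac : 1 - ((n : ℝ) - 1) ^ 2 < 0 := by
      have : (3 : ℝ) ≤ (n : ℝ) := by exact_mod_cast hn3
      nlinarith
    -- x ≠ 0
    have hxne : Vᵀ.mulVec y ≠ 0 := by
      intro hx0
      apply hy0
      have h1 : (Vᵀ)⁻¹ * Vᵀ = 1 := Matrix.nonsing_inv_mul _ hdT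
      have : ((Vᵀ)⁻¹ * Vᵀ).mulVec y = (Vᵀ)⁻¹.mulVec (Vᵀ.mulVec y) :=
        (Matrix.mulVec_mulVec _ _ _).symm
      rw [h1, hx0, Matrix.mulVec_zero, Matrix.one_mulVec] at this
      exact this
    -- some natAdd entry is nonzero
    obtain ⟨k, hk⟩ : ∃ k : Fin N, Vᵀ.mulVec y (Fin.natAdd N k) ≠ 0 := by
      by_contra h
      push_neg at h
      apply hxne
      funext j
      rw [Pi.zero_apply]
      refine Fin.addCases (fun i => ?_) (fun i => ?_) j
      · rw [hker y hy i, h i]; ring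
      · exact h i
    have hsum : ∑ k : Fin N, w k * z k * (Vᵀ.mulVec y (Fin.natAdd N k)) ^ 2 > 0 := by
      refine Finset.sum_pos' (fun k _ => hterm_nonneg y k) ⟨k, Finset.mem_univ k, ?_⟩
      have hk2 : 0 < (Vᵀ.mulVec y (Fin.natAdd N k)) ^ 2 := by positivity
      exact mul_pos (mul_pos (hw k) (hz k)) hk2
    exact mul_neg_of_neg_of_pos hfac hsum
end

section
/- Let B_1 = (I_N, −I_N)·V^T. Then for every y in the kernel of B_1, y^T A y = 0, where A is the symmetric Jacobi matrix of the Hermite recurrence. -/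
open Matrix

/-- Conservativity of the boundary matrix `B₁ = (I_N, -I_N) Vᵀ`: for every `y` in the
kernel of `B₁` one has `yᵀ A y = 0`, where `A` is the symmetric Jacobi matrix of the
Hermite recurrence and `V` the Hermite Vandermonde matrix satisfying
`V⁻¹ = diag(W,W) Vᵀ` and `V⁻¹ A V = diag(-Λ, Λ)`. -/
theorem boundary_matrix_B1_conservative
    (N : ℕ) (hN : 0 < N)
    (z w : Fin N → ℝ)
    (hz : ∀ k, 0 < z k) (hw : ∀ k, 0 < w k)
    (u ww : Fin (N + N) → ℝ)
    (hu1 : ∀ k : Fin N, u (Fin.castAdd N k) = -(z k))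
    (hu2 : ∀ k : Fin N, u (Fin.natAdd N k) = z k)
    (hww1 : ∀ k : Fin N, ww (Fin.castAdd N k) = w k)
    (hww2 : ∀ k : Fin N, ww (Fin.natAdd N k) = w k)
    (A V : Matrix (Fin (N + N)) (Fin (N + N)) ℝ)
    (hAsymm : Aᵀ = A)
    (hUnit : IsUnit V)
    (hVinv : V⁻¹ = Matrix.diagonal ww * Vᵀ)
    (hdiag : V⁻¹ * A * V = Matrix.diagonal u)
    (C : Matrix (Fin N) (Fin (N + N)) ℝ)
    (hC : ∀ (i : Fin N) (j : Fin (N + N)),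
      C i j = if j = Fin.castAdd N i then 1
        else if j = Fin.natAdd N i then (-1 : ℝ) else 0)
    (B₁ : Matrix (Fin N) (Fin (N + N)) ℝ)
    (hB₁ : B₁ = C * Vᵀ) :
    ∀ y : Fin (N + N) → ℝ, B₁.mulVec y = 0 → y ⬝ᵥ A.mulVec y = 0 := by
  intro y hy
  have hdet : IsUnit V.det := (Matrix.isUnit_iff_isUnit_det V).mp hUnit
  have hVV : V * V⁻¹ = 1 := Matrix.mul_nonsing_inv V hdet
  have hA : A = V * (Matrix.diagonal u * (Matrix.diagonal ww * Vᵀ)) := by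
    have h1 : V * (V⁻¹ * A * V * V⁻¹) = A := by
      rw [Matrix.mul_assoc (V⁻¹ * A) V V⁻¹, hVV, Matrix.mul_one,
        ← Matrix.mul_assoc, hVV, Matrix.one_mul]
    rw [← h1, hdiag, hVinv]
  set c : Fin (N + N) → ℝ := Vᵀ.mulVec y with hc
  have hne : ∀ k : Fin N, (Fin.castAdd N k : Fin (N + N)) ≠ Fin.natAdd N k := by
    intro k h
    have := congrArg Fin.val h
    simp only [Fin.coe_castAdd, Fin.coe_natAdd] at this
    omega
  have hker : ∀ k : Fin N, c (Fin.castAdd N k) = c (Fin.natAdd N k) := by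
    intro k
    have h0 : (C * Vᵀ).mulVec y k = 0 := by rw [← hB₁, hy]; rfl
    rw [← Matrix.mulVec_mulVec, ← hc] at h0
    have hs : C.mulVec c k = c (Fin.castAdd N k) - c (Fin.natAdd N k) := by
      unfold Matrix.mulVec dotProduct
      have hterm : ∀ j, C k j * c j =
          (if j = Fin.castAdd N k then c j else 0)
          + (if j = Fin.natAdd N k then -c j else 0) := by
        intro j
        rw [hC]
        by_cases h1 : j = Fin.castAdd N k
        · subst h1
          rw [if_pos rfl, if_pos rfl, if_neg (hne k)]
          ring
        · by_cases h2 : j = Fin.natAdd N k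
          · subst h2
            rw [if_neg h1, if_pos rfl, if_neg h1, if_pos rfl]
            ring
          · rw [if_neg h1, if_neg h2, if_neg h1, if_neg h2]
            ring
      rw [Finset.sum_congr rfl fun j _ => hterm j, Finset.sum_add_distrib,
        Finset.sum_ite_eq' Finset.univ, Finset.sum_ite_eq' Finset.univ]
      simp [sub_eq_add_neg]
    rw [hs] at h0
    linarith
  have key : y ⬝ᵥ A.mulVec y = ∑ j, c j * (u j * (ww j * c j)) := by
    rw [hA]
    simp only [← Matrix.mulVec_mulVec]
    rw [Matrix.dotProduct_mulVec, ← Matrix.mulVec_transpose, ← hc]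
    simp only [dotProduct, Matrix.mulVec_diagonal]
  rw [key, Fin.sum_univ_add]
  have hterm2 : ∀ k : Fin N,
      c (Fin.castAdd N k) * (u (Fin.castAdd N k) * (ww (Fin.castAdd N k) * c (Fin.castAdd N k)))
      = - (c (Fin.natAdd N k) * (u (Fin.natAdd N k) * (ww (Fin.natAdd N k) * c (Fin.natAdd N k)))) := by
    intro k
    rw [hu1, hu2, hww1, hww2, hker k]
    ring
  rw [Finset.sum_congr rfl fun k _ => hterm2 k, Finset.sum_neg_distrib]
  ring
end

section
/- Energy estimate (L² part of Lemma 5.1): Let U : [0,T] × [0,∞) → ℝ^m be a smooth solution, decaying as x → ∞, of ∂_t U + A ∂_x U = (1/ε) Q U − (0; E_1) − E_2 with U(x,0) = 0 and boundary condition such that U(0,t)^T A U(0,t) ≤ 0 for all t, where A is symmetric, Q = diag(0, −I_r), ε > 0, and E_1(·,t), E_2(·,t) ∈ L²(ℝ⁺) with ‖E_1(·,t)‖_{L²} ≤ C ε^{1/2+κ} and ‖E_2(·,t)‖_{L²} ≤ C ε^{1+κ} for all t ∈ [0,T] and some κ > 0. Then max_{t∈[0,T]} ‖U(·,t)‖_{L²(ℝ⁺)}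 ≤ C' ε^{1+κ} for a constant C' depending only on C and T. -/
open Matrix MeasureTheory Set

section helpers

lemma expNegInvGlue_mono : Monotone expNegInvGlue := by
  intro x y hxy
  rcases le_or_gt x 0 with hx | hx
  · rw [expNegInvGlue.zero_of_nonpos hx]; exact expNegInvGlue.nonneg y
  · have hy : 0 < y := hx.trans_le hxy
    unfold expNegInvGlue
    rw [if_neg (not_le.2 hx), if_neg (not_le.2 hy)]
    apply Real.exp_le_exp.2
    have : y⁻¹ ≤ x⁻¹ := by gcongr
    linarith

lemma smoothTransition_mono : Monotone Real.smoothTransition := by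
  intro x y hxy
  unfold Real.smoothTransition
  rw [div_le_div_iff₀ (Real.smoothTransition.pos_denom x) (Real.smoothTransition.pos_denom y)]
  have h1 : expNegInvGlue x ≤ expNegInvGlue y := expNegInvGlue_mono hxy
  have h2 : expNegInvGlue (1 - y) ≤ expNegInvGlue (1 - x) := expNegInvGlue_mono (by linarith)
  have h3 := mul_le_mul h1 h2 (expNegInvGlue.nonneg _) (expNegInvGlue.nonneg _)
  nlinarith [expNegInvGlue.nonneg x, expNegInvGlue.nonneg y]

lemma antitone_deriv_nonpos {χ : ℝ → ℝ} (h : Antitone χ) {d y : ℝ}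
    (hd : HasDerivAt χ d y) : d ≤ 0 := by
  have hs := hasDerivAt_iff_tendsto_slope.1 hd
  refine le_of_tendsto hs ?_
  filter_upwards [self_mem_nhdsWithin] with z hz
  rcases lt_or_gt_of_ne (Set.mem_compl_singleton_iff.1 hz) with h1 | h1
  · rw [slope_def_field, div_nonpos_iff]
    exact Or.inl ⟨sub_nonneg.2 (h h1.le), sub_nonpos.2 h1.le⟩
  · rw [slope_def_field, div_nonpos_iff]
    exact Or.inr ⟨sub_nonpos.2 (h h1.le), sub_nonneg.2 h1.le⟩

lemma gronwall_aux {v G : ℝ → ℝ} {T K : ℝ} (hT : 0 < T) (hK : 0 ≤ K)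
    (hd : ∀ t ∈ Icc (0:ℝ) T, HasDerivAt v (G t) t)
    (hle : ∀ t ∈ Icc (0:ℝ) T, G t ≤ v t + K)
    (h0 : v 0 = 0) : ∀ t ∈ Icc (0:ℝ) T, v t ≤ K * Real.exp T := by
  intro t ht
  set w : ℝ → ℝ := fun s => (v s + K) * Real.exp (-s) with hw
  have hwd : ∀ s ∈ Icc (0:ℝ) T, HasDerivAt w ((G s) * Real.exp (-s)
      - (v s + K) * Real.exp (-s)) s := by
    intro s hs
    have h1 : HasDerivAt (fun u => v u + K) (G s) s := (hd s hs).add_const K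
    have h2 : HasDerivAt (fun u : ℝ => Real.exp (-u)) (-Real.exp (-s)) s := by
      simpa [Function.comp_def] using (Real.hasDerivAt_exp (-s)).comp s (hasDerivAt_neg s)
    exact (h1.mul h2).congr_deriv (by ring)
  have hanti : AntitoneOn w (Icc (0:ℝ) T) := by
    apply antitoneOn_of_deriv_nonpos (convex_Icc _ _)
    · exact fun s hs => ((hwd s hs).continuousAt).continuousWithinAt
    · intro s hs
      rw [interior_Icc] at hs
      exact ((hwd s (Ioo_subset_Icc_self hs)).differentiableAt).differentiableWithinAt
    · intro s hs
      rw [interior_Icc] at hs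
      rw [(hwd s (Ioo_subset_Icc_self hs)).deriv]
      have := hle s (Ioo_subset_Icc_self hs)
      nlinarith [Real.exp_pos (-s)]
  have h1 : w t ≤ w 0 := hanti (left_mem_Icc.2 hT.le) ht ht.1
  rw [hw] at h1
  simp only [h0, Real.exp_zero, zero_add, mul_one, neg_zero] at h1
  have h3 : v t + K ≤ K * Real.exp t := by
    have := mul_le_mul_of_nonneg_right h1 (Real.exp_pos t).le
    rw [mul_assoc, ← Real.exp_add] at this
    simpa using this
  have h4 : Real.exp t ≤ Real.exp T := Real.exp_le_exp.2 ht.2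
  nlinarith [Real.exp_pos t]


lemma integrableOn_of_vanish (φ : ℝ → ℝ) (b : ℝ) (hφc : Continuous φ)
    (hφ0 : ∀ x, b < x → φ x = 0) : IntegrableOn φ (Ioi (0:ℝ)) := by
  have h1 : IntegrableOn φ (Ioc 0 b) :=
    (hφc.integrableOn_Icc).mono_set Ioc_subset_Icc_self
  have h2 : IntegrableOn φ (Ioi b) := by
    have he : EqOn (fun _ => (0:ℝ)) φ (Ioi b) := fun x hx => (hφ0 x hx).symm
    exact (integrableOn_zero).congr_fun he measurableSet_Ioi
  refine (h1.union h2).mono_set fun x hx => ?_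
  rcases le_or_gt x b with h | h
  · exact Or.inl ⟨hx, h⟩
  · exact Or.inr h

lemma hasDerivAt_param_integral (F F' : ℝ → ℝ → ℝ) (b s : ℝ) (hs : 0 ≤ s)
    (hFjc : Continuous fun q : ℝ × ℝ => F q.1 q.2)
    (hF'jc : Continuous fun q : ℝ × ℝ => F' q.1 q.2)
    (hFvan : ∀ x, b < x → F s x = 0)
    (hF'van : ∀ τ, -1 ≤ τ → ∀ x, b < x → F' τ x = 0)
    (hFd : ∀ τ x, HasDerivAt (fun σ => F σ x) (F' τ x) τ) :
    HasDerivAt (fun τ => ∫ x in Ioi (0:ℝ), F τ x) (∫ x in Ioi (0:ℝ), F' s x) s := by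
  have hFc : ∀ τ, Continuous (F τ) := fun τ => hFjc.comp (continuous_const.prodMk continuous_id)
  have hF'c : ∀ τ, Continuous (F' τ) := fun τ => hF'jc.comp (continuous_const.prodMk continuous_id)
  obtain ⟨M, hM⟩ := ((isCompact_Icc (a := s - 1) (b := s + 1)).prod
    (isCompact_Icc (a := (0:ℝ)) (b := b))).exists_bound_of_continuousOn hF'jc.continuousOn
  have key := hasDerivAt_integral_of_dominated_loc_of_deriv_le
    (μ := volume.restrict (Ioi (0:ℝ))) (F := F) (F' := F') (x₀ := s)
    (bound := (Icc (0:ℝ) b).indicator fun _ => M)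
    (s := Metric.ball s 1) (Metric.ball_mem_nhds s one_pos)
    (Filter.Eventually.of_forall fun τ => ((hFc τ).aestronglyMeasurable))
    (integrableOn_of_vanish (F s) b (hFc s) hFvan)
    ((hF'c s).aestronglyMeasurable)
    ?_ ?_ (Filter.Eventually.of_forall fun x τ _ => hFd τ x)
  · exact key.2
  · filter_upwards [self_mem_ae_restrict measurableSet_Ioi] with x hx
    intro τ hτ
    have hτ1 : |τ - s| < 1 := by
      have h := Metric.mem_ball.1 hτ
      rwa [Real.dist_eq] at h
    obtain ⟨hτa, hτb⟩ := abs_lt.1 hτ1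
    rcases le_or_gt x b with hxb | hxb
    · rw [indicator_of_mem (mem_Icc.2 ⟨le_of_lt hx, hxb⟩)]
      exact hM (τ, x) ⟨mem_Icc.2 ⟨by linarith, by linarith⟩, mem_Icc.2 ⟨le_of_lt hx, hxb⟩⟩
    · rw [hF'van τ (by linarith) x hxb,
        indicator_of_notMem (fun hmem => absurd (mem_Icc.1 hmem).2 (not_le.2 hxb))]
      simp
  · exact ((integrable_indicator_iff measurableSet_Icc).2
      (integrableOn_const measure_Icc_lt_top.ne)).integrableOn

lemma flux_ibp (c c' w dw fx : ℝ → ℝ) (Λ b : ℝ) (hb : 0 ≤ b)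
    (hcd : ∀ x, HasDerivAt c (c' x) x) (hwd : ∀ x, HasDerivAt w (dw x) x)
    (hc'c : Continuous c') (hcc : Continuous c) (hwc : Continuous w)
    (hdwc : Continuous dw) (hfxc : Continuous fx)
    (hvan : ∀ x, b < x → c x = 0 ∧ c' x = 0)
    (hc'np : ∀ x, c' x ≤ 0) (hcnn : ∀ x, 0 ≤ c x)
    (habs : ∀ x, |w x| ≤ Λ * fx x)
    (hcb : c b = 0)
    (hw0 : w 0 ≤ 0) :
    ∫ x in Ioi (0:ℝ), (c' x * Λ * fx x - c x * dw x) ≤ 0 := by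
  have hψvan : ∀ x, b < x → c' x * Λ * fx x - c x * dw x = 0 := by
    intro x hx
    rw [(hvan x hx).1, (hvan x hx).2]
    ring
  have hψc : Continuous fun x => c' x * Λ * fx x - c x * dw x :=
    ((hc'c.mul continuous_const).mul hfxc).sub (hcc.mul hdwc)
  have hsplitset : ∫ x in Ioi (0:ℝ), (c' x * Λ * fx x - c x * dw x)
      = ∫ x in Ioc (0:ℝ) b, (c' x * Λ * fx x - c x * dw x) := by
    rw [← Ioc_union_Ioi_eq_Ioi hb,
      setIntegral_union (Ioc_disjoint_Ioi le_rfl) measurableSet_Ioi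
        ((hψc.integrableOn_Icc).mono_set Ioc_subset_Icc_self)
        ((integrableOn_zero).congr_fun
          (fun x hx => (hψvan x hx).symm) measurableSet_Ioi)]
    have hz : ∫ x in Ioi b, (c' x * Λ * fx x - c x * dw x) = 0 := by
      rw [setIntegral_congr_fun measurableSet_Ioi
        (fun x hx => hψvan x hx : EqOn _ (fun _ => (0:ℝ)) (Ioi b))]
      simp
    rw [hz, add_zero]
  rw [hsplitset, ← intervalIntegral.integral_of_le hb]
  have hPd : ∀ x : ℝ, HasDerivAt (fun y => c y * w y) (c' x * w x + c x * dw x) x :=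
    fun x => (hcd x).mul (hwd x)
  have hPcont : Continuous fun x => c' x * w x + c x * dw x :=
    (hc'c.mul hwc).add (hcc.mul hdwc)
  have hFTC : ∫ x in (0:ℝ)..b, (c' x * w x + c x * dw x) = c b * w b - c 0 * w 0 :=
    intervalIntegral.integral_eq_sub_of_hasDerivAt (fun x _ => hPd x)
      (hPcont.intervalIntegrable _ _)
  have hsub : ∫ x in (0:ℝ)..b, (c' x * Λ * fx x - c x * dw x)
      = (∫ x in (0:ℝ)..b, c' x * (Λ * fx x + w x))
      - ∫ x in (0:ℝ)..b, (c' x * w x + c x * dw x) := by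
    rw [← intervalIntegral.integral_sub (f := fun x => c' x * (Λ * fx x + w x))
      (g := fun x => c' x * w x + c x * dw x)
      ((hc'c.mul ((continuous_const.mul hfxc).add hwc)).intervalIntegrable _ _)
      (hPcont.intervalIntegrable _ _)]
    apply intervalIntegral.integral_congr
    intro x _
    ring
  have hneg : ∫ x in (0:ℝ)..b, c' x * (Λ * fx x + w x) ≤ 0 := by
    rw [← neg_nonneg, ← intervalIntegral.integral_neg]
    apply intervalIntegral.integral_nonneg hb
    intro u _
    have h1 : c' u ≤ 0 := hc'np u
    have h2 : 0 ≤ Λ * fx u + w u := by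
      have h3 := habs u
      have h4 := neg_abs_le (w u)
      linarith
    nlinarith
  have hbc0 : c 0 * w 0 ≤ 0 := mul_nonpos_iff.2 (Or.inl ⟨hcnn 0, hw0⟩)
  rw [hsub, hFTC, hcb, zero_mul]
  linarith [hneg, hbc0]

lemma kee_const_bound (C ε κ T : ℝ) (hε : 0 < ε) :
    ((ε / 2) * (C * ε ^ ((1:ℝ)/2 + κ)) ^ 2 + (C * ε ^ ((1:ℝ) + κ)) ^ 2) * Real.exp T
      ≤ (C * Real.sqrt (3 / 2 * Real.exp T) * ε ^ ((1:ℝ) + κ)) ^ 2 := by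
  have e1 : (ε ^ ((1:ℝ)/2 + κ)) ^ 2 = ε ^ ((1:ℝ) + 2*κ) := by
    rw [sq, ← Real.rpow_add hε]
    ring_nf
  have e2 : (ε ^ ((1:ℝ) + κ)) ^ 2 = ε ^ ((2:ℝ) + 2*κ) := by
    rw [sq, ← Real.rpow_add hε]
    ring_nf
  have e3 : ε * ε ^ ((1:ℝ) + 2*κ) = ε ^ ((2:ℝ) + 2*κ) := by
    nth_rewrite 1 [← Real.rpow_one ε]
    rw [← Real.rpow_add hε]
    ring_nf
  have e4 : (ε / 2) * (C * ε ^ ((1:ℝ)/2 + κ)) ^ 2 + (C * ε ^ ((1:ℝ) + κ)) ^ 2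
      = 3 / 2 * (C ^ 2 * ε ^ ((2:ℝ) + 2*κ)) := by
    rw [mul_pow, mul_pow, e1, e2]
    nlinarith [e3]
  have e5 : Real.sqrt (3 / 2 * Real.exp T) ^ 2 = 3 / 2 * Real.exp T :=
    Real.sq_sqrt (by positivity)
  rw [e4, mul_pow, mul_pow, e5, e2]
  nlinarith [Real.exp_pos T, sq_nonneg C, Real.rpow_nonneg hε.le ((2:ℝ) + 2*κ)]

end helpers

set_option maxHeartbeats 3000000 in
/-- Energy estimate (L² part of Lemma 5.1): for a smooth, decaying solution `U` of
`∂ₜU + A ∂ₓU = (1/ε) Q U - (0; E₁) - E₂` on the half line with zero initial data,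
dissipative boundary condition `U(0,t)ᵀ A U(0,t) ≤ 0`, symmetric `A`,
`Q = diag(0, -I_r)`, and residuals bounded by `‖E₁(·,t)‖ ≤ C ε^{1/2+κ}`,
`‖E₂(·,t)‖ ≤ C ε^{1+κ}`, one has `max_{t∈[0,T]} ‖U(·,t)‖_{L²(ℝ⁺)} ≤ C' ε^{1+κ}`,
with `C'` depending only on `C` and `T`. -/
theorem kinetic_energy_estimate
    (T C κ : ℝ) (hT : 0 < T) (hC : 0 ≤ C) (hκ : 0 < κ) :
    ∃ C' : ℝ, 0 ≤ C' ∧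
      ∀ (p r : ℕ) (A : Matrix (Fin p ⊕ Fin r) (Fin p ⊕ Fin r) ℝ), Aᵀ = A →
      ∀ ε : ℝ, 0 < ε →
      ∀ (U E2 : ℝ → ℝ → (Fin p ⊕ Fin r) → ℝ) (E1 : ℝ → ℝ → Fin r → ℝ),
      -- smoothness of the solution
      (∀ i, ContDiff ℝ (⊤ : ℕ∞) (fun q : ℝ × ℝ => U q.1 q.2 i)) →
      -- decay as x → ∞
      (∀ t i, Filter.Tendsto (fun x => U t x i) Filter.atTop (nhds 0)) →
      -- the relaxation system with residual source terms
      (∀ t ∈ Icc (0 : ℝ) T, ∀ x ∈ Ici (0 : ℝ), ∀ i,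
        deriv (fun s => U s x i) t + ∑ j, A i j * deriv (fun y => U t y j) x
          = (1 / ε) * Sum.elim (fun _ => (0 : ℝ)) (fun jr => -U t x (Sum.inr jr)) i
            - Sum.elim (fun _ => (0 : ℝ)) (fun jr => E1 t x jr) i - E2 t x i) →
      -- zero initial data
      (∀ x ∈ Ici (0 : ℝ), ∀ i, U 0 x i = 0) →
      -- dissipative boundary condition
      (∀ t ∈ Icc (0 : ℝ) T, (fun i => U t 0 i) ⬝ᵥ A.mulVec (fun i => U t 0 i) ≤ 0) →
      -- square-integrability on the half line
      (∀ t ∈ Icc (0 : ℝ) T,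
        IntegrableOn (fun x => ∑ i, (U t x i) ^ 2) (Ioi (0 : ℝ))) →
      (∀ t ∈ Icc (0 : ℝ) T,
        IntegrableOn (fun x => ∑ j, (E1 t x j) ^ 2) (Ioi (0 : ℝ))) →
      (∀ t ∈ Icc (0 : ℝ) T,
        IntegrableOn (fun x => ∑ i, (E2 t x i) ^ 2) (Ioi (0 : ℝ))) →
      -- bounds on the residuals
      (∀ t ∈ Icc (0 : ℝ) T,
        ∫ x in Ioi (0 : ℝ), ∑ j, (E1 t x j) ^ 2 ≤ (C * ε ^ ((1 : ℝ) / 2 + κ)) ^ 2) →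
      (∀ t ∈ Icc (0 : ℝ) T,
        ∫ x in Ioi (0 : ℝ), ∑ i, (E2 t x i) ^ 2 ≤ (C * ε ^ ((1 : ℝ) + κ)) ^ 2) →
      -- conclusion: L² bound on the solution
      ∀ t ∈ Icc (0 : ℝ) T,
        ∫ x in Ioi (0 : ℝ), ∑ i, (U t x i) ^ 2 ≤ (C' * ε ^ ((1 : ℝ) + κ)) ^ 2 := by
  refine ⟨C * Real.sqrt (3 / 2 * Real.exp T), by positivity, ?_⟩
  intro p r A hA ε hε U E2 E1 hU hdec hPDE hinit hbc hUint hE1int hE2int hE1b hE2b t ht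
  -- symmetry of A entrywise
  have hAsym : ∀ i j : Fin p ⊕ Fin r, A j i = A i j := by
    intro i j
    calc A j i = Aᵀ i j := rfl
      _ = A i j := by rw [hA]
  -- time and space partial derivatives of U
  obtain ⟨dtU, hUt, hdtUc⟩ : ∃ dtU : ℝ → ℝ → (Fin p ⊕ Fin r) → ℝ,
      (∀ t x i, HasDerivAt (fun s => U s x i) (dtU t x i) t) ∧
      (∀ i, Continuous fun q : ℝ × ℝ => dtU q.1 q.2 i) := by
    refine ⟨fun t x i => fderiv ℝ (fun q : ℝ × ℝ => U q.1 q.2 i) (t, x) (1, 0), ?_, ?_⟩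
    · intro t x i
      have h1 : HasDerivAt (fun s : ℝ => ((s, x) : ℝ × ℝ)) ((1:ℝ), (0:ℝ)) t :=
        (hasDerivAt_id t).prodMk (hasDerivAt_const t x)
      have h2 := (((hU i).differentiable (by simp) (t, x)).hasFDerivAt).comp_hasDerivAt t h1
      simpa [Function.comp_def] using h2
    · intro i
      exact (((hU i).continuous_fderiv (by simp)).clm_apply continuous_const)
  obtain ⟨dxU, hUx, hdxUc⟩ : ∃ dxU : ℝ → ℝ → (Fin p ⊕ Fin r) → ℝ,
      (∀ t x i, HasDerivAt (fun y => U t y i) (dxU t x i) x) ∧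
      (∀ i, Continuous fun q : ℝ × ℝ => dxU q.1 q.2 i) := by
    refine ⟨fun t x i => fderiv ℝ (fun q : ℝ × ℝ => U q.1 q.2 i) (t, x) (0, 1), ?_, ?_⟩
    · intro t x i
      have h1 : HasDerivAt (fun y : ℝ => ((t, y) : ℝ × ℝ)) ((0:ℝ), (1:ℝ)) x :=
        (hasDerivAt_const x t).prodMk (hasDerivAt_id x)
      have h2 := (((hU i).differentiable (by simp) (t, x)).hasFDerivAt).comp_hasDerivAt x h1
      simpa [Function.comp_def] using h2
    · intro i
      exact (((hU i).continuous_fderiv (by simp)).clm_apply continuous_const)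
  have hUc : ∀ i, Continuous fun q : ℝ × ℝ => U q.1 q.2 i := fun i => (hU i).continuous
  -- the energy density and fluxes
  set f : ℝ → ℝ → ℝ := fun t x => ∑ i, U t x i ^ 2 with hf
  set dtf : ℝ → ℝ → ℝ := fun t x => ∑ i, 2 * U t x i * dtU t x i with hdtf
  set g : ℝ → ℝ → ℝ := fun t x => ∑ i, ∑ j, A i j * (U t x i * U t x j) with hg
  set dxg : ℝ → ℝ → ℝ := fun t x =>
    ∑ i, ∑ j, A i j * (dxU t x i * U t x j + U t x i * dxU t x j) with hdxg
  have hfnn : ∀ s x, 0 ≤ f s x := by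
    intro s x; rw [hf]; exact Finset.sum_nonneg fun i _ => sq_nonneg _
  have hft : ∀ s x, HasDerivAt (fun u => f u x) (dtf s x) s := by
    intro s x
    simp only [hf, hdtf]
    apply HasDerivAt.fun_sum
    intro i _
    simpa [pow_one] using (hUt s x i).fun_pow 2
  have hgx : ∀ s x, HasDerivAt (fun y => g s y) (dxg s x) x := by
    intro s x
    simp only [hg, hdxg]
    apply HasDerivAt.fun_sum
    intro i _
    apply HasDerivAt.fun_sum
    intro j _
    exact ((hUx s x i).mul (hUx s x j)).const_mul (A i j)
  have hfc : Continuous fun q : ℝ × ℝ => f q.1 q.2 := by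
    simp only [hf]
    exact continuous_finset_sum _ fun i _ => (hUc i).pow 2
  have hdtfc : Continuous fun q : ℝ × ℝ => dtf q.1 q.2 := by
    simp only [hdtf]
    exact continuous_finset_sum _ fun i _ =>
      (continuous_const.mul (hUc i)).mul (hdtUc i)
  have hgc : Continuous fun q : ℝ × ℝ => g q.1 q.2 := by
    simp only [hg]
    exact continuous_finset_sum _ fun i _ => continuous_finset_sum _ fun j _ =>
      continuous_const.mul ((hUc i).mul (hUc j))
  have hdxgc : Continuous fun q : ℝ × ℝ => dxg q.1 q.2 := by
    simp only [hdxg]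
    exact continuous_finset_sum _ fun i _ => continuous_finset_sum _ fun j _ =>
      continuous_const.mul (((hdxUc i).mul (hUc j)).add ((hUc i).mul (hdxUc j)))
  -- rewrite the PDE with the named derivatives
  have hPDE' : ∀ s ∈ Icc (0:ℝ) T, ∀ x ∈ Ici (0:ℝ), ∀ i,
      dtU s x i = -(∑ j, A i j * dxU s x j)
        + (1 / ε) * Sum.elim (fun _ => (0 : ℝ)) (fun jr => -U s x (Sum.inr jr)) i
        - Sum.elim (fun _ => (0 : ℝ)) (fun jr => E1 s x jr) i - E2 s x i := by
    intro s hs x hx i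
    have h := hPDE s hs x hx i
    rw [(hUt s x i).deriv] at h
    have hx' : ∀ j, deriv (fun y => U s y j) x = dxU s x j := fun j => (hUx s x j).deriv
    simp only [hx'] at h
    linarith
  -- the key pointwise differential inequality
  have hkey : ∀ s ∈ Icc (0:ℝ) T, ∀ x ∈ Ici (0:ℝ),
      dtf s x ≤ -dxg s x + f s x + (ε / 2) * (∑ j, E1 s x j ^ 2) + ∑ i, E2 s x i ^ 2 := by
    intro s hs x hx
    have hsym : dxg s x = ∑ i, 2 * U s x i * (∑ j, A i j * dxU s x j) := by
      simp only [hdxg]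
      calc ∑ i, ∑ j, A i j * (dxU s x i * U s x j + U s x i * dxU s x j)
          = (∑ i, ∑ j, A i j * (dxU s x i * U s x j))
            + ∑ i, ∑ j, A i j * (U s x i * dxU s x j) := by
            rw [← Finset.sum_add_distrib]
            apply Finset.sum_congr rfl; intro i _
            rw [← Finset.sum_add_distrib]
            apply Finset.sum_congr rfl; intro j _; ring
        _ = (∑ i, ∑ j, A i j * (U s x i * dxU s x j))
            + ∑ i, ∑ j, A i j * (U s x i * dxU s x j) := by
            congr 1
            rw [Finset.sum_comm]
            apply Finset.sum_congr rfl; intro i _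
            apply Finset.sum_congr rfl; intro j _
            rw [hAsym i j]; ring
        _ = ∑ i, 2 * U s x i * (∑ j, A i j * dxU s x j) := by
            rw [← Finset.sum_add_distrib]
            apply Finset.sum_congr rfl; intro i _
            rw [Finset.mul_sum, ← Finset.sum_add_distrib]
            apply Finset.sum_congr rfl; intro j _; ring
    have h1 : dtf s x = ∑ i, 2 * U s x i * (-(∑ j, A i j * dxU s x j)
        + (1 / ε) * Sum.elim (fun _ => (0 : ℝ)) (fun jr => -U s x (Sum.inr jr)) i
        - Sum.elim (fun _ => (0 : ℝ)) (fun jr => E1 s x jr) i - E2 s x i) := by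
      simp only [hdtf]
      apply Finset.sum_congr rfl; intro i _
      rw [hPDE' s hs x hx i]
    have h2 : dtf s x + dxg s x = ∑ i, 2 * U s x i *
        ((1 / ε) * Sum.elim (fun _ => (0 : ℝ)) (fun jr => -U s x (Sum.inr jr)) i
        - Sum.elim (fun _ => (0 : ℝ)) (fun jr => E1 s x jr) i - E2 s x i) := by
      rw [h1, hsym, ← Finset.sum_add_distrib]
      apply Finset.sum_congr rfl; intro i _; ring
    have h3 : f s x + (ε / 2) * (∑ j, E1 s x j ^ 2) + ∑ i, E2 s x i ^ 2
        = ∑ i : Fin p ⊕ Fin r, (U s x i ^ 2 + E2 s x i ^ 2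
          + Sum.elim (fun _ => (0 : ℝ)) (fun jr => (ε / 2) * E1 s x jr ^ 2) i) := by
      have e1 : ∑ i : Fin p ⊕ Fin r, Sum.elim (fun _ => (0 : ℝ)) (fun jr => (ε / 2) * E1 s x jr ^ 2) i
          = (ε / 2) * ∑ j, E1 s x j ^ 2 := by
        rw [Fintype.sum_sum_type, Finset.mul_sum]
        simp
      simp only [hf]
      rw [Finset.sum_add_distrib, Finset.sum_add_distrib, e1]
      ring
    have h4 : ∑ i, 2 * U s x i *
        ((1 / ε) * Sum.elim (fun _ => (0 : ℝ)) (fun jr => -U s x (Sum.inr jr)) i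
        - Sum.elim (fun _ => (0 : ℝ)) (fun jr => E1 s x jr) i - E2 s x i)
        ≤ ∑ i : Fin p ⊕ Fin r, (U s x i ^ 2 + E2 s x i ^ 2
          + Sum.elim (fun _ => (0 : ℝ)) (fun jr => (ε / 2) * E1 s x jr ^ 2) i) := by
      apply Finset.sum_le_sum
      intro i _
      rcases i with ia | ib
      · simp only [Sum.elim_inl]
        nlinarith [sq_nonneg (U s x (Sum.inl ia) + E2 s x (Sum.inl ia))]
      · simp only [Sum.elim_inr]
        set u := U s x (Sum.inr ib)
        set e1 := E1 s x ib
        set e2 := E2 s x (Sum.inr ib)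
        have hh : 2 * u * (1 / ε * -u - e1 - e2)
            = -((2 / ε) * u ^ 2) - 2 * u * e1 - 2 * u * e2 := by
          field_simp
        rw [hh]
        have key : 0 ≤ (2 / ε) * u ^ 2 + (ε / 2) * e1 ^ 2 + 2 * u * e1 := by
          have e : (2 / ε) * u ^ 2 + (ε / 2) * e1 ^ 2 + 2 * u * e1
              = (1 / (2 * ε)) * (2 * u + ε * e1) ^ 2 := by
            field_simp; ring
          rw [e]; positivity
        nlinarith [sq_nonneg (u + e2)]
    linarith [h2, h3 ▸ h4]
  -- boundary sign
  have hg0 : ∀ s ∈ Icc (0:ℝ) T, g s 0 ≤ 0 := by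
    intro s hs
    have h := hbc s hs
    have e : (fun i => U s 0 i) ⬝ᵥ A.mulVec (fun i => U s 0 i) = g s 0 := by
      simp only [hg, dotProduct, Matrix.mulVec, Finset.mul_sum]
      apply Finset.sum_congr rfl; intro i _
      apply Finset.sum_congr rfl; intro j _; ring
    rwa [e] at h
  -- the "speed"
  set Λ : ℝ := ∑ i : Fin p ⊕ Fin r, ∑ j : Fin p ⊕ Fin r, |A i j| with hΛdef
  have hΛ : 0 ≤ Λ := Finset.sum_nonneg fun i _ => Finset.sum_nonneg fun j _ => abs_nonneg _
  have hgf : ∀ s x, |g s x| ≤ Λ * f s x := by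
    intro s x
    have hsq : ∀ i : Fin p ⊕ Fin r, U s x i ^ 2 ≤ f s x := by
      intro i
      rw [hf]
      exact Finset.single_le_sum (fun j _ => sq_nonneg (U s x j)) (Finset.mem_univ i)
    have hterm : ∀ i j : Fin p ⊕ Fin r, |U s x i * U s x j| ≤ f s x := by
      intro i j
      rw [abs_mul]
      nlinarith [sq_nonneg (|U s x i| - |U s x j|), hsq i, hsq j, sq_abs (U s x i),
        sq_abs (U s x j), abs_nonneg (U s x i), abs_nonneg (U s x j)]
    calc |g s x| ≤ ∑ i, |∑ j, A i j * (U s x i * U s x j)| := by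
          rw [hg]; exact Finset.abs_sum_le_sum_abs _ _
      _ ≤ ∑ i, ∑ j, |A i j| * |U s x i * U s x j| := by
          apply Finset.sum_le_sum; intro i _
          refine (Finset.abs_sum_le_sum_abs _ _).trans ?_
          apply Finset.sum_le_sum; intro j _
          rw [abs_mul]
      _ ≤ ∑ i, ∑ j, |A i j| * f s x := by
          apply Finset.sum_le_sum; intro i _
          apply Finset.sum_le_sum; intro j _
          exact mul_le_mul_of_nonneg_left (hterm i j) (abs_nonneg _)
      _ = Λ * f s x := by
          rw [hΛdef, Finset.sum_mul]
          apply Finset.sum_congr rfl; intro i _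
          rw [Finset.sum_mul]
  -- the right-hand side constant
  set KK : ℝ := (ε / 2) * (C * ε ^ ((1:ℝ)/2 + κ)) ^ 2 + (C * ε ^ ((1:ℝ) + κ)) ^ 2 with hKK
  have hKKnn : 0 ≤ KK := by positivity
  -- main bound for truncated energies
  have hRbound : ∀ R : ℕ, ∫ x in Ioc (0:ℝ) (R:ℝ), f t x ≤ KK * Real.exp T := by
    intro R
    set a : ℝ := Λ * T + R with hadef
    have ha0 : 0 ≤ a := by
      have h1 : 0 ≤ Λ * T := mul_nonneg hΛ hT.le
      have h2 : (0:ℝ) ≤ (R:ℝ) := Nat.cast_nonneg R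
      rw [hadef]; linarith
    set b : ℝ := a + 1 + Λ with hbdef
    have hb0 : (0:ℝ) ≤ b := by rw [hbdef]; linarith
    set χ : ℝ → ℝ := fun y => Real.smoothTransition (a + 1 - y) with hχdef
    have hone : (1 : WithTop ℕ∞) ≤ ((⊤:ℕ∞) : WithTop ℕ∞) := by exact_mod_cast le_top
    have hχcd : ContDiff ℝ ((⊤:ℕ∞) : WithTop ℕ∞) χ := by
      rw [hχdef]
      have h1 : ContDiff ℝ ((⊤:ℕ∞) : WithTop ℕ∞) fun y : ℝ => a + 1 - y :=
        contDiff_const.sub contDiff_id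
      exact Real.smoothTransition.contDiff.comp h1
    have hχd : ∀ y, HasDerivAt χ (deriv χ y) y :=
      fun y => (hχcd.differentiable (by simp) y).hasDerivAt
    have hχanti : Antitone χ := by
      intro y z hyz
      simp only [hχdef]
      exact smoothTransition_mono (by linarith)
    have hχ'np : ∀ y, deriv χ y ≤ 0 := fun y => antitone_deriv_nonpos hχanti (hχd y)
    have hχ1 : ∀ y, y ≤ a → χ y = 1 := by
      intro y hy
      simp only [hχdef]
      exact Real.smoothTransition.one_of_one_le (by linarith)
    have hχ0 : ∀ y, a + 1 ≤ y → χ y = 0 := by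
      intro y hy
      simp only [hχdef]
      exact Real.smoothTransition.zero_of_nonpos (by linarith)
    have hχnn : ∀ y, 0 ≤ χ y := by
      intro y; simp only [hχdef]; exact Real.smoothTransition.nonneg _
    have hχle1 : ∀ y, χ y ≤ 1 := by
      intro y; simp only [hχdef]; exact Real.smoothTransition.le_one _
    have hχ'0 : ∀ y, a + 1 < y → deriv χ y = 0 := by
      intro y hy
      have hEq : χ =ᶠ[nhds y] fun _ => (0:ℝ) := by
        filter_upwards [lt_mem_nhds hy] with z hz
        exact hχ0 z hz.le
      rw [hEq.deriv_eq]
      exact deriv_const y 0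
    have hχ'c : Continuous (deriv χ) := hχcd.continuous_deriv hone
    -- the localized energy integrand and its time derivative
    set F : ℝ → ℝ → ℝ := fun s x => χ (x + Λ * s) * f s x with hFdef
    set F' : ℝ → ℝ → ℝ := fun s x =>
      deriv χ (x + Λ * s) * Λ * f s x + χ (x + Λ * s) * dtf s x with hF'def
    have hin : Continuous fun q : ℝ × ℝ => q.2 + Λ * q.1 :=
      continuous_snd.add (continuous_const.mul continuous_fst)
    have hFjc : Continuous fun q : ℝ × ℝ => F q.1 q.2 := by
      simp only [hFdef]
      exact (hχcd.continuous.comp hin).mul hfc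
    have hF'jc : Continuous fun q : ℝ × ℝ => F' q.1 q.2 := by
      simp only [hF'def]
      exact (((hχ'c.comp hin).mul continuous_const).mul hfc).add
        ((hχcd.continuous.comp hin).mul hdtfc)
    have hFc : ∀ s, Continuous (F s) := fun s => hFjc.comp (continuous_const.prodMk continuous_id)
    have hF'c : ∀ s, Continuous (F' s) := fun s => hF'jc.comp (continuous_const.prodMk continuous_id)
    -- vanishing beyond b
    have hvan : ∀ s : ℝ, -1 ≤ s → ∀ x : ℝ, b < x →
        χ (x + Λ * s) = 0 ∧ deriv χ (x + Λ * s) = 0 := by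
      intro s hs x hx
      have hgain : Λ * (-1) ≤ Λ * s := mul_le_mul_of_nonneg_left hs hΛ
      have h1 : a + 1 < x + Λ * s := by
        rw [hbdef] at hx
        nlinarith
      exact ⟨hχ0 _ h1.le, hχ'0 _ h1⟩
    have hFvan : ∀ s : ℝ, -1 ≤ s → ∀ x : ℝ, b < x → F s x = 0 := by
      intro s hs x hx
      simp only [hFdef]
      rw [(hvan s hs x hx).1, zero_mul]
    have hF'van : ∀ s : ℝ, -1 ≤ s → ∀ x : ℝ, b < x → F' s x = 0 := by
      intro s hs x hx
      simp only [hF'def]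
      rw [(hvan s hs x hx).1, (hvan s hs x hx).2]
      ring
    -- time derivative of the integrand
    have hFd : ∀ (s x : ℝ), HasDerivAt (fun τ => F τ x) (F' s x) s := by
      intro s x
      simp only [hFdef, hF'def]
      have h1 : HasDerivAt (fun τ : ℝ => x + Λ * τ) Λ s := by
        simpa using ((hasDerivAt_id s).const_mul Λ).const_add x
      have h2 : HasDerivAt (fun τ : ℝ => χ (x + Λ * τ)) (deriv χ (x + Λ * s) * Λ) s :=
        (hχd _).comp s h1
      exact h2.mul (hft s x)
    -- localized energy and its derivative
    set v : ℝ → ℝ := fun s => ∫ x in Ioi (0:ℝ), F s x with hvdef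
    set G : ℝ → ℝ := fun s => ∫ x in Ioi (0:ℝ), F' s x with hGdef
    have hvd : ∀ s ∈ Icc (0:ℝ) T, HasDerivAt v (G s) s := by
      intro s hs
      simp only [hvdef, hGdef]
      exact hasDerivAt_param_integral F F' b s hs.1 hFjc hF'jc
        (hFvan s (by linarith [hs.1])) hF'van hFd
    -- the differential inequality
    have hGle : ∀ s ∈ Icc (0:ℝ) T, G s ≤ v s + KK := by
      intro s hs
      have hs1 : (-1:ℝ) ≤ s := by linarith [hs.1]
      have hχcont : Continuous fun x : ℝ => χ (x + Λ * s) :=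
        hχcd.continuous.comp (continuous_id.add continuous_const)
      have hχ'cont : Continuous fun x : ℝ => deriv χ (x + Λ * s) :=
        hχ'c.comp (continuous_id.add continuous_const)
      have hfcont : Continuous fun x : ℝ => f s x := hfc.comp (continuous_const.prodMk continuous_id)
      have hdxgcont : Continuous fun x : ℝ => dxg s x := hdxgc.comp (continuous_const.prodMk continuous_id)
      have hgcont : Continuous fun x : ℝ => g s x := hgc.comp (continuous_const.prodMk continuous_id)
      -- the four pieces
      have hI1 : IntegrableOn (fun x =>
          deriv χ (x + Λ * s) * Λ * f s x - χ (x + Λ * s) * dxg s x) (Ioi (0:ℝ)) := by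
        apply integrableOn_of_vanish _ b
        · exact ((hχ'cont.mul continuous_const).mul hfcont).sub (hχcont.mul hdxgcont)
        · intro x hx
          rw [(hvan s hs1 x hx).1, (hvan s hs1 x hx).2]
          ring
      have hI2 : IntegrableOn (F s) (Ioi (0:ℝ)) :=
        integrableOn_of_vanish _ b (hFc s) (hFvan s hs1)
      have hE1m : AEStronglyMeasurable (fun x => ∑ j, E1 s x j ^ 2)
          (volume.restrict (Ioi (0:ℝ))) := (hE1int s hs).aestronglyMeasurable
      have hE2m : AEStronglyMeasurable (fun x => ∑ i, E2 s x i ^ 2)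
          (volume.restrict (Ioi (0:ℝ))) := (hE2int s hs).aestronglyMeasurable
      have hI3' : IntegrableOn (fun x => χ (x + Λ * s) * ∑ j, E1 s x j ^ 2) (Ioi (0:ℝ)) := by
        refine Integrable.mono (hE1int s hs) (hχcont.aestronglyMeasurable.mul hE1m) ?_
        filter_upwards with x
        rw [Real.norm_eq_abs, Real.norm_eq_abs, abs_mul]
        have h1 : 0 ≤ ∑ j, E1 s x j ^ 2 := Finset.sum_nonneg fun j _ => sq_nonneg _
        have h2 : |χ (x + Λ * s)| ≤ 1 := abs_le.2 ⟨by linarith [hχnn (x + Λ * s)], hχle1 _⟩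
        rw [abs_of_nonneg h1]
        exact mul_le_of_le_one_left h1 h2
      have hI3 : IntegrableOn (fun x => (ε / 2) * (χ (x + Λ * s) * ∑ j, E1 s x j ^ 2))
          (Ioi (0:ℝ)) := hI3'.const_mul (ε / 2)
      have hI4 : IntegrableOn (fun x => χ (x + Λ * s) * ∑ i, E2 s x i ^ 2) (Ioi (0:ℝ)) := by
        refine Integrable.mono (hE2int s hs) (hχcont.aestronglyMeasurable.mul hE2m) ?_
        filter_upwards with x
        rw [Real.norm_eq_abs, Real.norm_eq_abs, abs_mul]
        have h1 : 0 ≤ ∑ i, E2 s x i ^ 2 := Finset.sum_nonneg fun i _ => sq_nonneg _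
        have h2 : |χ (x + Λ * s)| ≤ 1 := abs_le.2 ⟨by linarith [hχnn (x + Λ * s)], hχle1 _⟩
        rw [abs_of_nonneg h1]
        exact mul_le_of_le_one_left h1 h2
      have hF'int : IntegrableOn (F' s) (Ioi (0:ℝ)) :=
        integrableOn_of_vanish _ b (hF'c s) (hF'van s hs1)
      -- pointwise bound
      have hpt : ∀ x ∈ Ioi (0:ℝ), F' s x ≤
          (deriv χ (x + Λ * s) * Λ * f s x - χ (x + Λ * s) * dxg s x)
          + χ (x + Λ * s) * f s x
          + (ε / 2) * (χ (x + Λ * s) * ∑ j, E1 s x j ^ 2)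
          + χ (x + Λ * s) * ∑ i, E2 s x i ^ 2 := by
        intro x hx
        have hk := hkey s hs x (mem_Ici.2 (le_of_lt hx))
        have hm := mul_le_mul_of_nonneg_left hk (hχnn (x + Λ * s))
        have he : χ (x + Λ * s) * (-dxg s x + f s x + (ε / 2) * (∑ j, E1 s x j ^ 2)
            + ∑ i, E2 s x i ^ 2)
            = -(χ (x + Λ * s) * dxg s x) + χ (x + Λ * s) * f s x
            + (ε / 2) * (χ (x + Λ * s) * ∑ j, E1 s x j ^ 2)
            + χ (x + Λ * s) * ∑ i, E2 s x i ^ 2 := by ring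
        simp only [hF'def]
        rw [he] at hm
        linarith
      have hI2' : IntegrableOn (fun x => χ (x + Λ * s) * f s x) (Ioi (0:ℝ)) := by
        simpa only [hFdef] using hI2
      have hI12 : IntegrableOn (fun x =>
          (deriv χ (x + Λ * s) * Λ * f s x - χ (x + Λ * s) * dxg s x)
          + χ (x + Λ * s) * f s x) (Ioi (0:ℝ)) := hI1.add hI2'
      have hI123 : IntegrableOn (fun x =>
          (deriv χ (x + Λ * s) * Λ * f s x - χ (x + Λ * s) * dxg s x)
          + χ (x + Λ * s) * f s x
          + (ε / 2) * (χ (x + Λ * s) * ∑ j, E1 s x j ^ 2)) (Ioi (0:ℝ)) := hI12.add hI3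
      have hI1234 : IntegrableOn (fun x =>
          (deriv χ (x + Λ * s) * Λ * f s x - χ (x + Λ * s) * dxg s x)
          + χ (x + Λ * s) * f s x
          + (ε / 2) * (χ (x + Λ * s) * ∑ j, E1 s x j ^ 2)
          + χ (x + Λ * s) * ∑ i, E2 s x i ^ 2) (Ioi (0:ℝ)) := hI123.add hI4
      have hmono : G s ≤ ∫ x in Ioi (0:ℝ),
          ((deriv χ (x + Λ * s) * Λ * f s x - χ (x + Λ * s) * dxg s x)
          + χ (x + Λ * s) * f s x
          + (ε / 2) * (χ (x + Λ * s) * ∑ j, E1 s x j ^ 2)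
          + χ (x + Λ * s) * ∑ i, E2 s x i ^ 2) := by
        simp only [hGdef]
        exact setIntegral_mono_on hF'int hI1234 measurableSet_Ioi hpt
      have hsplit : ∫ x in Ioi (0:ℝ),
          ((deriv χ (x + Λ * s) * Λ * f s x - χ (x + Λ * s) * dxg s x)
          + χ (x + Λ * s) * f s x
          + (ε / 2) * (χ (x + Λ * s) * ∑ j, E1 s x j ^ 2)
          + χ (x + Λ * s) * ∑ i, E2 s x i ^ 2)
          = (∫ x in Ioi (0:ℝ), (deriv χ (x + Λ * s) * Λ * f s x - χ (x + Λ * s) * dxg s x))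
          + (∫ x in Ioi (0:ℝ), χ (x + Λ * s) * f s x)
          + (∫ x in Ioi (0:ℝ), (ε / 2) * (χ (x + Λ * s) * ∑ j, E1 s x j ^ 2))
          + ∫ x in Ioi (0:ℝ), χ (x + Λ * s) * ∑ i, E2 s x i ^ 2 := by
        rw [integral_add hI123 hI4, integral_add hI12 hI3, integral_add hI1 hI2']
      -- bound each piece
      have hb3 : ∫ x in Ioi (0:ℝ), (ε / 2) * (χ (x + Λ * s) * ∑ j, E1 s x j ^ 2)
          ≤ (ε / 2) * (C * ε ^ ((1:ℝ)/2 + κ)) ^ 2 := by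
        rw [MeasureTheory.integral_const_mul]
        refine mul_le_mul_of_nonneg_left ?_ (by linarith [hε.le] : (0:ℝ) ≤ ε / 2)
        refine le_trans (setIntegral_mono_on hI3' (hE1int s hs) measurableSet_Ioi ?_)
          (hE1b s hs)
        intro x _
        exact mul_le_of_le_one_left (Finset.sum_nonneg fun j _ => sq_nonneg _) (hχle1 _)
      have hb4 : ∫ x in Ioi (0:ℝ), χ (x + Λ * s) * ∑ i, E2 s x i ^ 2
          ≤ (C * ε ^ ((1:ℝ) + κ)) ^ 2 := by
        refine le_trans (setIntegral_mono_on hI4 (hE2int s hs) measurableSet_Ioi ?_)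
          (hE2b s hs)
        intro x _
        exact mul_le_of_le_one_left (Finset.sum_nonneg fun i _ => sq_nonneg _) (hχle1 _)
      -- integration by parts for the flux piece
      have hb1 : ∫ x in Ioi (0:ℝ),
          (deriv χ (x + Λ * s) * Λ * f s x - χ (x + Λ * s) * dxg s x) ≤ 0 := by
        refine flux_ibp (fun x => χ (x + Λ * s)) (fun x => deriv χ (x + Λ * s))
          (fun x => g s x) (fun x => dxg s x) (fun x => f s x) Λ b hb0
          ?_ (fun x => hgx s x) hχ'cont hχcont hgcont hdxgcont hfcont
          (fun x hx => hvan s hs1 x hx) (fun x => hχ'np _) (fun x => hχnn _)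
          (fun x => hgf s x) ?_ (hg0 s hs)
        · intro x
          have h1 : HasDerivAt (fun y : ℝ => y + Λ * s) 1 x := (hasDerivAt_id x).add_const _
          have h2 : HasDerivAt (fun y => χ (y + Λ * s)) (deriv χ (x + Λ * s) * 1) x :=
            (hχd _).comp x h1
          simpa using h2
        · exact hχ0 (b + Λ * s) (by nlinarith [mul_nonneg hΛ hs.1])
      -- assemble the differential inequality
      have hvs : ∫ x in Ioi (0:ℝ), χ (x + Λ * s) * f s x = v s := by
        simp only [hvdef, hFdef]
      rw [hsplit] at hmono
      rw [hKK]
      linarith [hmono, hb1, hb3, hb4, hvs.ge, hvs.le]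
    -- zero initial energy
    have hv0 : v 0 = 0 := by
      simp only [hvdef]
      have he : EqOn (F 0) (fun _ => (0:ℝ)) (Ioi (0:ℝ)) := by
        intro x hx
        have hfz : f 0 x = 0 := by
          simp only [hf]
          apply Finset.sum_eq_zero
          intro i _
          rw [hinit x (mem_Ici.2 (le_of_lt hx)) i]
          simp
        simp only [hFdef]
        rw [hfz, mul_zero]
      rw [setIntegral_congr_fun measurableSet_Ioi he]
      simp
    -- Gronwall
    have hvt := gronwall_aux hT hKKnn hvd hGle hv0 t ht
    -- compare the truncated integral with the localized energy
    have hcmp : ∫ x in Ioc (0:ℝ) (R:ℝ), f t x ≤ v t := by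
      have he : EqOn (fun x => f t x) (F t) (Ioc (0:ℝ) (R:ℝ)) := by
        intro x hx
        have hle : x + Λ * t ≤ a := by
          have h1 : Λ * t ≤ Λ * T := mul_le_mul_of_nonneg_left ht.2 hΛ
          have h2 : x ≤ (R:ℝ) := hx.2
          rw [hadef]; linarith
        simp only [hFdef]
        rw [hχ1 (x + Λ * t) hle, one_mul]
      rw [setIntegral_congr_fun measurableSet_Ioc he]
      have hmono2 := setIntegral_mono_set (s := Ioc (0:ℝ) (R:ℝ)) (t := Ioi (0:ℝ))
        (integrableOn_of_vanish (F t) b (hFc t) (hFvan t (by linarith [ht.1])))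
        (Filter.Eventually.of_forall fun x => by
          simp only [hFdef]
          exact mul_nonneg (hχnn _) (hfnn t x))
        (HasSubset.Subset.eventuallyLE Ioc_subset_Ioi_self)
      simpa only [hvdef] using hmono2
    exact hcmp.trans hvt
  -- pass to the limit
  have hlim : ∫ x in Ioi (0:ℝ), f t x ≤ KK * Real.exp T := by
    have hm : Monotone (fun n : ℕ => Ioc (0:ℝ) (n:ℝ)) := fun m n hmn =>
      Ioc_subset_Ioc le_rfl (by exact_mod_cast hmn)
    have hUn : (⋃ n : ℕ, Ioc (0:ℝ) (n:ℝ)) = Ioi 0 := by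
      ext x
      simp only [mem_iUnion, mem_Ioc, mem_Ioi]
      constructor
      · rintro ⟨n, h1, _⟩; exact h1
      · intro hx
        obtain ⟨n, hn⟩ := exists_nat_ge x
        exact ⟨n, hx, hn⟩
    have hfi : IntegrableOn (fun x => f t x) (⋃ n : ℕ, Ioc (0:ℝ) (n:ℝ)) := by
      rw [hUn]
      simpa only [hf] using hUint t ht
    have htd := tendsto_setIntegral_of_monotone (fun n : ℕ => measurableSet_Ioc) hm hfi
    rw [hUn] at htd
    exact le_of_tendsto htd (Filter.Eventually.of_forall hRbound)
  -- numerical conversion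
  have heq : KK * Real.exp T ≤ (C * Real.sqrt (3 / 2 * Real.exp T) * ε ^ ((1:ℝ) + κ)) ^ 2 := by
    rw [hKK]
    exact kee_const_bound C ε κ T hε
  have hfin : ∫ x in Ioi (0:ℝ), ∑ i, U t x i ^ 2 = ∫ x in Ioi (0:ℝ), f t x := by
    simp only [hf]
  rw [hfin]
  exact hlim.trans heq
end
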